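/- For every real number t > 0, define V₃(t) = 3t(2 + 3t⁻³) if t⁻³ ≤ 2/9 and V₃(t) = 8t if t⁻³ ≥ 2/9. Then V₃(t) ∈ E(t), and every element e of E(t) with e ∉ {γ₁(t), γ₂(t)} satisfies e ≥ V₃(t). -/

import Mathlib

/-- `γ_n(t) = t·n·(2 + n·t⁻³)` -/
noncomputable def gammaF (t : ℝ) (n : ℕ) : ℝ := t * n * (2 + n * (t ^ 3)⁻¹)

/-- `α_k(t) = t·(k(k+2) − 1 + t⁻³)` -/
noncomputable def alphaF (t : ℝ) (k : ℕ) : ℝ := t * (k * (k + 2) - 1 + (t ^ 3)⁻¹)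

/-- `β_l(t) = t·l·(l+2)` -/
noncomputable def betaF (t : ℝ) (l : ℕ) : ℝ := t * l * (l + 2)

/-- The set `E(t)` of nonzero eigenvalues of the unit-volume Berger sphere Laplacian. -/
def EV (t : ℝ) : Set ℝ :=
  {x | ∃ n : ℕ, 1 ≤ n ∧ x = gammaF t n} ∪
  {x | ∃ k : ℕ, Odd k ∧ 1 ≤ k ∧ x = alphaF t k} ∪
  {x | ∃ l : ℕ, Even l ∧ 2 ≤ l ∧ x = betaF t l}

/-!
Each of the three families is increasing in its index, and `α₁ = γ₁`. So once `γ₁, γ₂` are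
removed, the smallest element of `E(t)` is `min(γ₃, β₂)`: the other candidates `α_k` (`k ≥ 3`)
and `β_l` (`l ≥ 4`) exceed `β₂ = 8t`. Finally `γ₃ = 6t + 9t·t⁻³ ≤ 8t` exactly when `t⁻³ ≤ 2/9`.
-/

section

variable {t : ℝ}

theorem gammaF_mono (ht : 0 ≤ t) : Monotone (gammaF t) := by
  intro a b hab
  unfold gammaF
  gcongr

theorem betaF_mono (ht : 0 ≤ t) : Monotone (betaF t) := by
  intro a b hab
  unfold betaF
  gcongr

theorem alphaF_one_eq_gammaF_one (t : ℝ) : alphaF t 1 = gammaF t 1 := by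
  simp only [alphaF, gammaF]
  push_cast
  ring

theorem betaF_two_le_alphaF (ht : 0 ≤ t) {k : ℕ} (hk : 3 ≤ k) : betaF t 2 ≤ alphaF t k := by
  have hk' : (3 : ℝ) ≤ k := by exact_mod_cast hk
  have hs : 0 ≤ t * (t ^ 3)⁻¹ := by positivity
  have hquad : 14 ≤ (k : ℝ) * (k + 2) - 1 := by nlinarith
  calc betaF t 2 = t * 8 := by simp only [betaF]; push_cast; ring
    _ ≤ t * ((k : ℝ) * (k + 2) - 1) := by gcongr; linarith
    _ ≤ alphaF t k := by rw [alphaF, mul_add]; linarith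

theorem gammaF_three_sub_betaF_two (t : ℝ) :
    gammaF t 3 - betaF t 2 = 9 * t * ((t ^ 3)⁻¹ - 2 / 9) := by
  simp only [gammaF, betaF]
  push_cast
  ring

theorem gammaF_three_le_betaF_two (ht : 0 ≤ t) (h : (t ^ 3)⁻¹ ≤ 2 / 9) :
    gammaF t 3 ≤ betaF t 2 := by
  have := gammaF_three_sub_betaF_two t
  nlinarith

theorem betaF_two_le_gammaF_three (ht : 0 ≤ t) (h : 2 / 9 ≤ (t ^ 3)⁻¹) :
    betaF t 2 ≤ gammaF t 3 := by
  have := gammaF_three_sub_betaF_two t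
  nlinarith

theorem gammaF_mem_EV {n : ℕ} (hn : 1 ≤ n) : gammaF t n ∈ EV t :=
  Or.inl (Or.inl ⟨n, hn, rfl⟩)

theorem betaF_mem_EV {l : ℕ} (hl : Even l) (hl2 : 2 ≤ l) : betaF t l ∈ EV t :=
  Or.inr ⟨l, hl, hl2, rfl⟩

theorem gammaF_three_or_betaF_two_le_of_mem_EV (ht : 0 ≤ t) {e : ℝ} (he : e ∈ EV t)
    (hne : e ∉ ({gammaF t 1, gammaF t 2} : Set ℝ)) : gammaF t 3 ≤ e ∨ betaF t 2 ≤ e := by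
  rcases he with (⟨n, hn, rfl⟩ | ⟨k, hk, -, rfl⟩) | ⟨l, -, hl, rfl⟩
  · left
    have hn3 : 3 ≤ n := by
      by_contra!
      interval_cases n <;> simp at hne
    exact gammaF_mono ht hn3
  · right
    have hk3 : 3 ≤ k := by
      obtain ⟨m, rfl⟩ := hk
      rcases Nat.eq_zero_or_pos m with rfl | hm
      · simp [alphaF_one_eq_gammaF_one] at hne
      · omega
    exact betaF_two_le_alphaF ht hk3
  · exact Or.inr (betaF_mono ht hl)

end

theorem berger_lambda3 (t : ℝ) (ht : 0 < t) :
    ∃ V : ℝ,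
      ((t ^ 3)⁻¹ ≤ 2 / 9 → V = 3 * t * (2 + 3 * (t ^ 3)⁻¹)) ∧
      (2 / 9 ≤ (t ^ 3)⁻¹ → V = 8 * t) ∧
      V ∈ EV t ∧
      ∀ e ∈ EV t, e ∉ ({gammaF t 1, gammaF t 2} : Set ℝ) → V ≤ e := by
  refine ⟨min (gammaF t 3) (betaF t 2), fun h => ?_, fun h => ?_, ?_, fun e he hne => ?_⟩
  · rw [min_eq_left (gammaF_three_le_betaF_two ht.le h), gammaF]
    push_cast
    ring
  · rw [min_eq_right (betaF_two_le_gammaF_three ht.le h), betaF]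
    push_cast
    ring
  · rcases min_choice (gammaF t 3) (betaF t 2) with h | h <;> rw [h]
    · exact gammaF_mem_EV (by norm_num)
    · exact betaF_mem_EV even_two le_rfl
  · exact min_le_iff.2 (gammaF_three_or_betaF_two_le_of_mem_EV ht.le he hne)
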